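/- arXiv:2505.18270 — 7 statements merged into one kernel-verified Lean document; each statement's English description precedes it below -/
import Mathlib

section
/- The allocation map N is a right inverse of the wrench map M: for every f_d ∈ ℝ^3 and τ_d = (τ_x, τ_y, τ_z) ∈ ℝ^3, the allocated thrusts t_1, t_2, t_3, t_4 satisfy ∑_{i=1}^4 t_i = f_d and ∑_{i=1}^4 l_i × t_i = τ_d. -/
/-- Cross product on `EuclideanSpace ℝ (Fin 3)`. -/
noncomputable def cross3 (a b : EuclideanSpace ℝ (Fin 3)) : EuclideanSpace ℝ (Fin 3) :=
  !₂[a 1 * b 2 - a 2 * b 1, a 2 * b 0 - a 0 * b 2, a 0 * b 1 - a 1 * b 0]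

/-- The rotor-arm position vectors `l₁, l₂, l₃, l₄`. -/
noncomputable def armVec (lx ly : ℝ) : Fin 4 → EuclideanSpace ℝ (Fin 3) :=
  ![!₂[lx, ly, 0], !₂[lx, -ly, 0], !₂[-lx, -ly, 0], !₂[-lx, ly, 0]]

/-- The unit vector `k = (0,0,1)`. -/
noncomputable def kvec : EuclideanSpace ℝ (Fin 3) := !₂[0, 0, 1]

/-- The unit vectors along the yaw directions in the `i_B`-`j_B` plane. -/
noncomputable def yawVec (lx ly : ℝ) : Fin 4 → EuclideanSpace ℝ (Fin 3) :=
  let r := Real.sqrt (lx ^ 2 + ly ^ 2)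
  ![!₂[-ly / r, lx / r, 0], !₂[ly / r, lx / r, 0], !₂[ly / r, -lx / r, 0], !₂[-ly / r, -lx / r, 0]]

/-- The allocation map `N`: allocated thrusts `t₁, t₂, t₃, t₄` for a desired force
`f_d` and desired torque `τ_d = (τ_x, τ_y, τ_z)`. -/
noncomputable def alloc (lx ly : ℝ) (fd τd : EuclideanSpace ℝ (Fin 3)) :
    Fin 4 → EuclideanSpace ℝ (Fin 3) :=
  let r := Real.sqrt (lx ^ 2 + ly ^ 2)
  ![(1 / 4 : ℝ) • fd + (τd 0 / (4 * ly)) • kvec + (-τd 1 / (4 * lx)) • kvec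
      + (τd 2 / (4 * r)) • yawVec lx ly 0,
    (1 / 4 : ℝ) • fd + (-τd 0 / (4 * ly)) • kvec + (-τd 1 / (4 * lx)) • kvec
      + (τd 2 / (4 * r)) • yawVec lx ly 1,
    (1 / 4 : ℝ) • fd + (-τd 0 / (4 * ly)) • kvec + (τd 1 / (4 * lx)) • kvec
      + (τd 2 / (4 * r)) • yawVec lx ly 2,
    (1 / 4 : ℝ) • fd + (τd 0 / (4 * ly)) • kvec + (τd 1 / (4 * lx)) • kvec
      + (τd 2 / (4 * r)) • yawVec lx ly 3]

set_option maxHeartbeats 2000000 in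
/-- **The allocation map `N` is a right inverse of the wrench map `M`**: the allocated
thrusts satisfy `∑ tᵢ = f_d` and `∑ lᵢ × tᵢ = τ_d`. -/
theorem alloc_right_inverse (lx ly : ℝ) (hlx : 0 < lx) (hly : 0 < ly)
    (fd τd : EuclideanSpace ℝ (Fin 3)) :
    (∑ i, alloc lx ly fd τd i) = fd ∧
    (∑ i, cross3 (armVec lx ly i) (alloc lx ly fd τd i)) = τd := by
  have hsum : (0:ℝ) < lx ^ 2 + ly ^ 2 := by positivity
  have hr : (0:ℝ) < Real.sqrt (lx ^ 2 + ly ^ 2) := Real.sqrt_pos.mpr hsum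
  have hr2 : Real.sqrt (lx ^ 2 + ly ^ 2) ^ 2 = lx ^ 2 + ly ^ 2 := Real.sq_sqrt hsum.le
  set r := Real.sqrt (lx ^ 2 + ly ^ 2) with hrdef
  have key : ∀ a b c : ℝ, a * b / (c * Real.sqrt (lx ^ 2 + ly ^ 2) * Real.sqrt (lx ^ 2 + ly ^ 2))
      = a * b / (c * (lx ^ 2 + ly ^ 2)) := by
    intro a b c
    rw [mul_assoc, Real.mul_self_sqrt hsum.le]
  constructor <;>
  · ext x
    simp only [Fin.sum_univ_four, alloc, cross3, armVec, kvec, yawVec,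
      Matrix.cons_val_zero, Matrix.cons_val_one, Matrix.head_cons,
      Matrix.cons_val_two, Matrix.tail_cons, Matrix.cons_val_three,
        PiLp.toLp_apply]
    fin_cases x <;>
      simp only [PiLp.add_apply, PiLp.smul_apply, smul_eq_mul, Fin.isValue,
        Matrix.cons_val_zero, Matrix.cons_val_one, Matrix.head_cons,
        Matrix.cons_val_two, Matrix.tail_cons, Matrix.cons_val_fin_one,
        Fin.mk_zero, Fin.mk_one,
        show ((⟨2, by norm_num⟩ : Fin 3)) = 2 from rfl] <;>
      (try simp only [div_mul_div_comm, key]) <;>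
      field_simp <;> ring_nf <;> rfl
end

section
/- The output of the allocation map N is orthogonal to the kernel of the wrench map M: for every f_d, τ_d ∈ ℝ^3 with allocated thrusts (t_1, t_2, t_3, t_4) = N(f_d, τ_d), and for every (s_1, s_2, s_3, s_4) ∈ (ℝ^3)^4 with ∑_{i=1}^4 s_i = 0 and ∑_{i=1}^4 l_i × s_i = 0, one has ∑_{i=1}^4 ⟨t_i, s_i⟩ = 0. -/
/-- **The output of the allocation map `N` is orthogonal to the kernel of the wrench
map `M`**: for every `(s₁, s₂, s₃, s₄)` with `∑ sᵢ = 0` and `∑ lᵢ × sᵢ = 0`, one has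
`∑ ⟨tᵢ, sᵢ⟩ = 0` where `(t₁, t₂, t₃, t₄) = N(f_d, τ_d)`. -/
theorem alloc_orthogonal_to_kernel (lx ly : ℝ) (hlx : 0 < lx) (hly : 0 < ly)
    (fd τd : EuclideanSpace ℝ (Fin 3)) (s : Fin 4 → EuclideanSpace ℝ (Fin 3))
    (hs_force : (∑ i, s i) = 0)
    (hs_torque : (∑ i, cross3 (armVec lx ly i) (s i)) = 0) :
    (∑ i, inner ℝ (alloc lx ly fd τd i) (s i) : ℝ) = 0 := by
  have hF : ∀ j : Fin 3, s 0 j + s 1 j + s 2 j + s 3 j = 0 := by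
    intro j
    have h := congrArg (fun v => v j) hs_force
    simpa [Fin.sum_univ_four] using h
  have hT : ∀ j : Fin 3,
      cross3 (armVec lx ly 0) (s 0) j + cross3 (armVec lx ly 1) (s 1) j
        + cross3 (armVec lx ly 2) (s 2) j + cross3 (armVec lx ly 3) (s 3) j = 0 := by
    intro j
    have h := congrArg (fun v => v j) hs_torque
    simpa [Fin.sum_univ_four] using h
  have hT0 := hT 0
  have hT1 := hT 1
  have hT2 := hT 2
  simp only [cross3, armVec, PiLp.toLp_apply, Matrix.cons_val_zero, Matrix.cons_val_one, Matrix.head_cons,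
    Matrix.cons_val_two, Matrix.cons_val_three, Matrix.tail_cons] at hT0 hT1 hT2
  simp only [alloc, kvec, yawVec, PiLp.toLp_apply, Fin.sum_univ_four, PiLp.inner_apply, RCLike.inner_apply,
    conj_trivial, Fin.sum_univ_three, PiLp.add_apply, PiLp.smul_apply, smul_eq_mul,
    Matrix.cons_val_zero, Matrix.cons_val_one, Matrix.head_cons, Matrix.cons_val_two,
    Matrix.tail_cons]
  simp only [PiLp.toLp_apply, Matrix.cons_val_three, Matrix.head_cons, Matrix.tail_cons, Matrix.cons_val_zero,
    Matrix.cons_val_one, Matrix.cons_val_two, PiLp.add_apply, PiLp.smul_apply, smul_eq_mul]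
  have hy : ly * ly⁻¹ = 1 := mul_inv_cancel₀ hly.ne'
  have hx : lx * lx⁻¹ = 1 := mul_inv_cancel₀ hlx.ne'
  linear_combination
    (-(τd 0 * ly⁻¹ / 4) * (s 0 2 - s 1 2 - s 2 2 + s 3 2)) * hy
    + ((τd 1 * lx⁻¹ / 4) * (s 0 2 + s 1 2 - s 2 2 - s 3 2)) * hx
    + (fd 0 / 4) * hF 0 + (fd 1 / 4) * hF 1 + (fd 2 / 4) * hF 2
    + (τd 0 / (4 * ly ^ 2)) * hT0 + (τd 1 / (4 * lx ^ 2)) * hT1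
    + (τd 2 / (4 * Real.sqrt (lx ^ 2 + ly ^ 2) ^ 2)) * hT2
end

section
/- Energy-optimality of the control allocation: for every f_d, τ_d ∈ ℝ^3, the allocated thrusts (t_1, t_2, t_3, t_4) = N(f_d, τ_d) minimize the energy cost E(s_1,s_2,s_3,s_4) = (1/2) ∑_{i=1}^4 ‖s_i‖^2 over all (s_1, s_2, s_3, s_4) ∈ (ℝ^3)^4 satisfying the constraints ∑_{i=1}^4 s_i = f_d and ∑_{i=1}^4 l_i × s_i = τ_d; that is, for every such (s_1,s_2,s_3,s_4), (1/2) ∑_{i=1}^4 ‖t_i‖^2 ≤ (1/2) ∑_{i=1}^4 ‖s_i‖^2. -/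
theorem alloc_aux_z (lx ly : ℝ) (hlx : lx ≠ 0) (hly : ly ≠ 0)
    (a2 b2 c2 d2 : ℝ) :
    (((a2 + b2 + c2 + d2) / 4 + (ly * a2 - ly * b2 - ly * c2 + ly * d2) / (4 * ly) + -(-(lx * a2) - lx * b2 + lx * c2 + lx * d2) / (4 * lx)) ^ 2 + ((a2 + b2 + c2 + d2) / 4 + -(ly * a2 - ly * b2 - ly * c2 + ly * d2) / (4 * ly) + -(-(lx * a2) - lx * b2 + lx * c2 + lx * d2) / (4 * lx)) ^ 2 + ((a2 + b2 + c2 + d2) / 4 + -(ly * a2 - ly * b2 - ly * c2 + ly * d2) / (4 * ly) + (-(lx * a2) - lx * b2 + lx * c2 + lx * d2) / (4 * lx)) ^ 2 + ((a2 + b2 + c2 + d2) / 4 + (ly * a2 - ly * b2 - ly * c2 + ly * d2) / (4 * ly) + (-(lx * a2) - lx * b2 + lx * c2 + lx * d2) / (4 * lx)) ^ 2) ≤ (a2 ^ 2 + b2 ^ 2 + c2 ^ 2 + d2 ^ 2) := by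
  rw [← sub_nonneg]
  have key : (a2 ^ 2 + b2 ^ 2 + c2 ^ 2 + d2 ^ 2) - (((a2 + b2 + c2 + d2) / 4 + (ly * a2 - ly * b2 - ly * c2 + ly * d2) / (4 * ly) + -(-(lx * a2) - lx * b2 + lx * c2 + lx * d2) / (4 * lx)) ^ 2 + ((a2 + b2 + c2 + d2) / 4 + -(ly * a2 - ly * b2 - ly * c2 + ly * d2) / (4 * ly) + -(-(lx * a2) - lx * b2 + lx * c2 + lx * d2) / (4 * lx)) ^ 2 + ((a2 + b2 + c2 + d2) / 4 + -(ly * a2 - ly * b2 - ly * c2 + ly * d2) / (4 * ly) + (-(lx * a2) - lx * b2 + lx * c2 + lx * d2) / (4 * lx)) ^ 2 + ((a2 + b2 + c2 + d2) / 4 + (ly * a2 - ly * b2 - ly * c2 + ly * d2) / (4 * ly) + (-(lx * a2) - lx * b2 + lx * c2 + lx * d2) / (4 * lx)) ^ 2) = ((a2 - ((a2 + b2 + c2 + d2) / 4 + (ly * a2 - ly * b2 - ly * c2 + ly * d2) / (4 * ly) + -(-(lx * a2) - lx * b2 + lx * c2 + lx * d2) / (4 * lx))) ^ 2 + (b2 -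 ((a2 + b2 + c2 + d2) / 4 + -(ly * a2 - ly * b2 - ly * c2 + ly * d2) / (4 * ly) + -(-(lx * a2) - lx * b2 + lx * c2 + lx * d2) / (4 * lx))) ^ 2 + (c2 - ((a2 + b2 + c2 + d2) / 4 + -(ly * a2 - ly * b2 - ly * c2 + ly * d2) / (4 * ly) + (-(lx * a2) - lx * b2 + lx * c2 + lx * d2) / (4 * lx))) ^ 2 + (d2 - ((a2 + b2 + c2 + d2) / 4 + (ly * a2 - ly * b2 - ly * c2 + ly * d2) / (4 * ly) + (-(lx * a2) - lx * b2 + lx * c2 + lx * d2) / (4 * lx))) ^ 2) := by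
    field_simp
    ring
  rw [key]
  positivity

theorem alloc_aux_xy (lx ly : ℝ) (hL : lx ^ 2 + ly ^ 2 ≠ 0)
    (a0 a1 b0 b1 c0 c1 d0 d1 : ℝ) :
    (((a0 + b0 + c0 + d0) / 4 + (lx * a1 - ly * a0 + lx * b1 + ly * b0 - lx * c1 + ly * c0 - lx * d1 - ly * d0) * (-ly) / (4 * (lx ^ 2 + ly ^ 2))) ^ 2 + ((a1 + b1 + c1 + d1) / 4 + (lx * a1 - ly * a0 + lx * b1 + ly * b0 - lx * c1 + ly * c0 - lx * d1 - ly * d0) * lx / (4 * (lx ^ 2 + ly ^ 2))) ^ 2 + ((a0 + b0 + c0 + d0) / 4 + (lx * a1 - ly * a0 + lx * b1 + ly * b0 - lx * c1 + ly * c0 - lx * d1 - ly * d0) * ly / (4 * (lx ^ 2 + ly ^ 2))) ^ 2 + ((a1 + b1 + c1 + d1) / 4 + (lx * a1 - ly * a0 + lx * b1 + ly * b0 - lx * c1 + ly * c0 - lx * d1 - ly * d0) * lx / (4 * (lx ^ 2 + ly ^ 2))) ^ 2 + ((a0 + b0 + c0 + d0) / 4 + (lx * a1 - ly * a0 + lx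 * b1 + ly * b0 - lx * c1 + ly * c0 - lx * d1 - ly * d0) * ly / (4 * (lx ^ 2 + ly ^ 2))) ^ 2 + ((a1 + b1 + c1 + d1) / 4 + (lx * a1 - ly * a0 + lx * b1 + ly * b0 - lx * c1 + ly * c0 - lx * d1 - ly * d0) * (-lx) / (4 * (lx ^ 2 + ly ^ 2))) ^ 2 + ((a0 + b0 + c0 + d0) / 4 + (lx * a1 - ly * a0 + lx * b1 + ly * b0 - lx * c1 + ly * c0 - lx * d1 - ly * d0) * (-ly) / (4 * (lx ^ 2 + ly ^ 2))) ^ 2 + ((a1 + b1 + c1 + d1) / 4 + (lx * a1 - ly * a0 + lx * b1 + ly * b0 - lx * c1 + ly * c0 - lx * d1 - ly * d0) * (-lx) / (4 * (lx ^ 2 + ly ^ 2))) ^ 2) ≤ (a0 ^ 2 + a1 ^ 2 + b0 ^ 2 + b1 ^ 2 + c0 ^ 2 + c1 ^ 2 + d0 ^ 2 + d1 ^ 2) := by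
  rw [← sub_nonneg]
  have key : (a0 ^ 2 + a1 ^ 2 + b0 ^ 2 + b1 ^ 2 + c0 ^ 2 + c1 ^ 2 + d0 ^ 2 + d1 ^ 2) - (((a0 + b0 + c0 + d0) / 4 + (lx * a1 - ly * a0 + lx * b1 + ly * b0 - lx * c1 + ly * c0 - lx * d1 - ly * d0) * (-ly) / (4 * (lx ^ 2 + ly ^ 2))) ^ 2 + ((a1 + b1 + c1 + d1) / 4 + (lx * a1 - ly * a0 + lx * b1 + ly * b0 - lx * c1 + ly * c0 - lx * d1 - ly * d0) * lx / (4 * (lx ^ 2 + ly ^ 2))) ^ 2 + ((a0 + b0 + c0 + d0) / 4 + (lx * a1 - ly * a0 + lx * b1 + ly * b0 - lx * c1 + ly * c0 - lx * d1 - ly * d0) * ly / (4 * (lx ^ 2 + ly ^ 2))) ^ 2 + ((a1 + b1 + c1 + d1) / 4 + (lx * a1 - ly * a0 + lx * b1 + ly * b0 - lx * c1 + ly * c0 - lx * d1 - ly * d0) * lx / (4 * (lx ^ 2 + ly ^ 2))) ^ 2 + ((a0 + b0 + c0 + d0) / 4 + (lx * a1 - ly * a0 + lx * b1 + ly * b0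 - lx * c1 + ly * c0 - lx * d1 - ly * d0) * ly / (4 * (lx ^ 2 + ly ^ 2))) ^ 2 + ((a1 + b1 + c1 + d1) / 4 + (lx * a1 - ly * a0 + lx * b1 + ly * b0 - lx * c1 + ly * c0 - lx * d1 - ly * d0) * (-lx) / (4 * (lx ^ 2 + ly ^ 2))) ^ 2 + ((a0 + b0 + c0 + d0) / 4 + (lx * a1 - ly * a0 + lx * b1 + ly * b0 - lx * c1 + ly * c0 - lx * d1 - ly * d0) * (-ly) / (4 * (lx ^ 2 + ly ^ 2))) ^ 2 + ((a1 + b1 + c1 + d1) / 4 + (lx * a1 - ly * a0 + lx * b1 + ly * b0 - lx * c1 + ly * c0 - lx * d1 - ly * d0) * (-lx) / (4 * (lx ^ 2 + ly ^ 2))) ^ 2) = ((a0 - ((a0 + b0 + c0 + d0) / 4 + (lx * a1 - ly * a0 + lx * b1 + ly * b0 - lx * c1 + ly * c0 - lx * d1 - ly * d0) * (-ly) / (4 * (lx ^ 2 + ly ^ 2)))) ^ 2 + (a1 - ((a1 + b1 + c1 + d1) / 4 + (lx * a1 - ly * a0 + lx * b1 + ly * b0 - lx * c1 + ly * c0 -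 lx * d1 - ly * d0) * lx / (4 * (lx ^ 2 + ly ^ 2)))) ^ 2 + (b0 - ((a0 + b0 + c0 + d0) / 4 + (lx * a1 - ly * a0 + lx * b1 + ly * b0 - lx * c1 + ly * c0 - lx * d1 - ly * d0) * ly / (4 * (lx ^ 2 + ly ^ 2)))) ^ 2 + (b1 - ((a1 + b1 + c1 + d1) / 4 + (lx * a1 - ly * a0 + lx * b1 + ly * b0 - lx * c1 + ly * c0 - lx * d1 - ly * d0) * lx / (4 * (lx ^ 2 + ly ^ 2)))) ^ 2 + (c0 - ((a0 + b0 + c0 + d0) / 4 + (lx * a1 - ly * a0 + lx * b1 + ly * b0 - lx * c1 + ly * c0 - lx * d1 - ly * d0) * ly / (4 * (lx ^ 2 + ly ^ 2)))) ^ 2 + (c1 - ((a1 + b1 + c1 + d1) / 4 + (lx * a1 - ly * a0 + lx * b1 + ly * b0 - lx * c1 + ly * c0 - lx * d1 - ly * d0) * (-lx) / (4 * (lx ^ 2 + ly ^ 2)))) ^ 2 + (d0 - ((a0 + b0 + c0 + d0) / 4 + (lx * a1 - ly * a0 + lx * b1 + ly * b0 - lx * c1 + ly * c0 - lx * d1 -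 ly * d0) * (-ly) / (4 * (lx ^ 2 + ly ^ 2)))) ^ 2 + (d1 - ((a1 + b1 + c1 + d1) / 4 + (lx * a1 - ly * a0 + lx * b1 + ly * b0 - lx * c1 + ly * c0 - lx * d1 - ly * d0) * (-lx) / (4 * (lx ^ 2 + ly ^ 2)))) ^ 2) := by
    field_simp
    ring
  rw [key]
  positivity


/-- **Energy-optimality of the control allocation**: the allocated thrusts
`(t₁, t₂, t₃, t₄) = N(f_d, τ_d)` minimize `E(s) = (1/2) ∑ ‖sᵢ‖²` over all
`(s₁, s₂, s₃, s₄)` with `∑ sᵢ = f_d` and `∑ lᵢ × sᵢ = τ_d`. -/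
theorem alloc_energy_optimal (lx ly : ℝ) (hlx : 0 < lx) (hly : 0 < ly)
    (fd τd : EuclideanSpace ℝ (Fin 3)) (s : Fin 4 → EuclideanSpace ℝ (Fin 3))
    (hs_force : (∑ i, s i) = fd)
    (hs_torque : (∑ i, cross3 (armVec lx ly i) (s i)) = τd) :
    (1 / 2 : ℝ) * ∑ i, ‖alloc lx ly fd τd i‖ ^ 2 ≤ (1 / 2 : ℝ) * ∑ i, ‖s i‖ ^ 2 := by
  have hnorm : ∀ v : EuclideanSpace ℝ (Fin 3), ‖v‖ ^ 2 = v 0 ^ 2 + v 1 ^ 2 + v 2 ^ 2 := by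
    intro v
    rw [EuclideanSpace.norm_eq, Real.sq_sqrt (by positivity)]
    simp [Fin.sum_univ_three, sq_abs]
  have hF : ∀ j, s 0 j + s 1 j + s 2 j + s 3 j = fd j := by
    intro j
    have := congrArg (fun v => v j) hs_force
    simpa [Fin.sum_univ_four] using this
  have hT : ∀ j, (cross3 (armVec lx ly 0) (s 0)) j + (cross3 (armVec lx ly 1) (s 1)) j
      + (cross3 (armVec lx ly 2) (s 2)) j + (cross3 (armVec lx ly 3) (s 3)) j = τd j := by
    intro j
    have := congrArg (fun v => v j) hs_torque
    simpa [Fin.sum_univ_four] using this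
  have ht0 : ly * s 0 2 - ly * s 1 2 - ly * s 2 2 + ly * s 3 2 = τd 0 := by
    have := hT 0
    simp only [cross3, armVec, Matrix.cons_val_zero, Matrix.cons_val_one, Matrix.head_cons,
      Matrix.cons_val_two, Matrix.tail_cons, Matrix.cons_val_three, PiLp.toLp_apply] at this
    linarith
  have ht1 : -(lx * s 0 2) - lx * s 1 2 + lx * s 2 2 + lx * s 3 2 = τd 1 := by
    have := hT 1
    simp only [cross3, armVec, Matrix.cons_val_zero, Matrix.cons_val_one, Matrix.head_cons,
      Matrix.cons_val_two, Matrix.tail_cons, Matrix.cons_val_three, PiLp.toLp_apply] at this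
    linarith
  have ht2 : lx * s 0 1 - ly * s 0 0 + lx * s 1 1 + ly * s 1 0 - lx * s 2 1 + ly * s 2 0
      - lx * s 3 1 - ly * s 3 0 = τd 2 := by
    have := hT 2
    simp only [cross3, armVec, Matrix.cons_val_zero, Matrix.cons_val_one, Matrix.head_cons,
      Matrix.cons_val_two, Matrix.tail_cons, Matrix.cons_val_three, PiLp.toLp_apply] at this
    linarith
  simp only [Fin.sum_univ_four, hnorm, alloc, kvec, yawVec, Matrix.cons_val_zero,
    Matrix.cons_val_one, Matrix.head_cons, Matrix.cons_val_two, Matrix.tail_cons,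
    Matrix.cons_val_three, PiLp.toLp_apply, PiLp.add_apply, PiLp.smul_apply, smul_eq_mul]
  set r := Real.sqrt (lx ^ 2 + ly ^ 2) with hrdef
  have hr2 : r ^ 2 = lx ^ 2 + ly ^ 2 := by
    rw [hrdef]; exact Real.sq_sqrt (by positivity)
  have hrr : ∀ X Y : ℝ, X / (4 * r) * (Y / r) = X * Y / (4 * (lx ^ 2 + ly ^ 2)) := by
    intro X Y
    rw [div_mul_div_comm, mul_assoc, ← pow_two, hr2]
  simp only [hrr, mul_zero, add_zero, mul_one]
  rw [← hF 0, ← hF 1, ← hF 2, ← ht0, ← ht1, ← ht2]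
  have hz := alloc_aux_z lx ly hlx.ne' hly.ne' (s 0 2) (s 1 2) (s 2 2) (s 3 2)
  have hxy := alloc_aux_xy lx ly (by positivity) (s 0 0) (s 0 1) (s 1 0) (s 1 1)
    (s 2 0) (s 2 1) (s 3 0) (s 3 1)
  linarith [hz, hxy]
end

section
/- Uniqueness of the energy-optimal allocation: for every f_d, τ_d ∈ ℝ^3, if (s_1, s_2, s_3, s_4) ∈ (ℝ^3)^4 satisfies ∑_{i=1}^4 s_i = f_d and ∑_{i=1}^4 l_i × s_i = τ_d and minimizes E(s_1,s_2,s_3,s_4) = (1/2) ∑_{i=1}^4 ‖s_i‖^2 among all tuples satisfying these two constraints, then (s_1, s_2, s_3, s_4) = N(f_d, τ_d), the allocated thrusts. -/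
set_option maxHeartbeats 3200000

/-- **Uniqueness of the energy-optimal allocation**: if `(s₁, s₂, s₃, s₄)` satisfies
`∑ sᵢ = f_d` and `∑ lᵢ × sᵢ = τ_d` and minimizes `E(s) = (1/2) ∑ ‖sᵢ‖²` among all
tuples satisfying these constraints, then `s = N(f_d, τ_d)`. -/
theorem alloc_energy_optimal_unique (lx ly : ℝ) (hlx : 0 < lx) (hly : 0 < ly)
    (fd τd : EuclideanSpace ℝ (Fin 3)) (s : Fin 4 → EuclideanSpace ℝ (Fin 3))
    (hs_force : (∑ i, s i) = fd)
    (hs_torque : (∑ i, cross3 (armVec lx ly i) (s i)) = τd)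
    (hs_min : ∀ u : Fin 4 → EuclideanSpace ℝ (Fin 3),
      (∑ i, u i) = fd → (∑ i, cross3 (armVec lx ly i) (u i)) = τd →
      (1 / 2 : ℝ) * ∑ i, ‖s i‖ ^ 2 ≤ (1 / 2 : ℝ) * ∑ i, ‖u i‖ ^ 2) :
    s = alloc lx ly fd τd := by
  have hrpos : 0 < Real.sqrt (lx ^ 2 + ly ^ 2) := Real.sqrt_pos.mpr (by positivity)
  have hr2 : Real.sqrt (lx ^ 2 + ly ^ 2) ^ 2 = lx ^ 2 + ly ^ 2 :=
    Real.sq_sqrt (by positivity)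
  set t := alloc lx ly fd τd with ht
  -- force constraint for t
  have htf : (∑ i, t i) = fd := by
    ext j
    fin_cases j <;>
      simp [ht, alloc, kvec, yawVec, Fin.sum_univ_four] <;> ring
  -- torque constraint for t
  have htτ : (∑ i, cross3 (armVec lx ly i) (t i)) = τd := by
    ext j
    fin_cases j
    · simp [ht, alloc, kvec, yawVec, armVec, cross3, Fin.sum_univ_four]
      field_simp
      ring
    · simp [ht, alloc, kvec, yawVec, armVec, cross3, Fin.sum_univ_four]
      field_simp
      ring
    · simp [ht, alloc, kvec, yawVec, armVec, cross3, Fin.sum_univ_four]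
      field_simp
      linear_combination (-4 * τd 2) * hr2
  -- scalar constraint equations for s
  have eF0 : s 0 0 + s 1 0 + s 2 0 + s 3 0 = fd 0 := by
    have h := congrArg (· (0 : Fin 3)) hs_force
    simpa [Fin.sum_univ_four] using h
  have eF1 : s 0 1 + s 1 1 + s 2 1 + s 3 1 = fd 1 := by
    have h := congrArg (· (1 : Fin 3)) hs_force
    simpa [Fin.sum_univ_four] using h
  have eF2 : s 0 2 + s 1 2 + s 2 2 + s 3 2 = fd 2 := by
    have h := congrArg (· (2 : Fin 3)) hs_force
    simpa [Fin.sum_univ_four] using h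
  have eTx : s 0 2 - s 1 2 - s 2 2 + s 3 2 = τd 0 / ly := by
    have h := congrArg (· (0 : Fin 3)) hs_torque
    simp [cross3, armVec, Fin.sum_univ_four] at h
    field_simp
    linear_combination h
  have eTy : s 2 2 + s 3 2 - s 0 2 - s 1 2 = τd 1 / lx := by
    have h := congrArg (· (1 : Fin 3)) hs_torque
    simp [cross3, armVec, Fin.sum_univ_four] at h
    field_simp
    linear_combination h
  have eTz : lx * s 0 1 - ly * s 0 0 + lx * s 1 1 + ly * s 1 0 - lx * s 2 1 + ly * s 2 0
      - lx * s 3 1 - ly * s 3 0 = τd 2 := by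
    have h := congrArg (· (2 : Fin 3)) hs_torque
    simp [cross3, armVec, Fin.sum_univ_four] at h
    linear_combination h
  have hinv : (lx ^ 2 + ly ^ 2) / (Real.sqrt (lx ^ 2 + ly ^ 2)) ^ 2 = 1 := by
    rw [hr2]; field_simp
  -- orthogonality
  have horth : (∑ i, (inner ℝ (t i) (s i - t i) : ℝ)) = 0 := by
    simp only [Fin.sum_univ_four, PiLp.inner_apply, RCLike.inner_apply, conj_trivial,
      Fin.sum_univ_three, ht, alloc, kvec, yawVec]
    simp [PiLp.sub_apply, PiLp.add_apply, PiLp.smul_apply, smul_eq_mul]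
    linear_combination (fd 0 / 4) * eF0 + (fd 1 / 4) * eF1 + (fd 2 / 4) * eF2
      + (τd 0 / (4 * ly)) * eTx + (τd 1 / (4 * lx)) * eTy
      + (τd 2 / (4 * (Real.sqrt (lx ^ 2 + ly ^ 2)) ^ 2)) * eTz
      - (τd 2 ^ 2 / (4 * (Real.sqrt (lx ^ 2 + ly ^ 2)) ^ 2)) * hinv
  -- energy expansion
  have hexp : ∀ i, ‖s i‖ ^ 2 = ‖t i‖ ^ 2 + 2 * (inner ℝ (t i) (s i - t i) : ℝ)
      + ‖s i - t i‖ ^ 2 := by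
    intro i
    have h := norm_add_sq_real (t i) (s i - t i)
    simpa using h
  have hmin := hs_min t htf htτ
  have h1 : ∑ i, ‖s i - t i‖ ^ 2 ≤ 0 := by
    simp only [Fin.sum_univ_four] at hmin horth ⊢
    rw [hexp 0, hexp 1, hexp 2, hexp 3] at hmin
    linarith
  have h2 : ∑ i, ‖s i - t i‖ ^ 2 = 0 :=
    le_antisymm h1 (by positivity)
  have h3 := (Finset.sum_eq_zero_iff_of_nonneg
    (fun i _ => by positivity : ∀ i ∈ Finset.univ, (0:ℝ) ≤ ‖s i - t i‖ ^ 2)).mp h2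
  funext i
  have h4 := h3 i (Finset.mem_univ i)
  have h5 : s i - t i = 0 := by
    rwa [pow_eq_zero_iff (by norm_num), norm_eq_zero] at h4
  exact sub_eq_zero.mp h5
end

section
/- Correctness of the explicit inverse-allocation formulas: let t = (t_x, t_y, t_z) ∈ ℝ^3 with t ≠ 0 and with (t_x, t_z) ≠ (0, 0), let t̂ = t/‖t‖, and let c_t > 0. Define Ω = sqrt(‖t‖/c_t), β = -arcsin(t̂_y), and α = π - arcsin(t̂_x/cos β) if t_z < 0 and t_x ≥ 0, α = -π - arcsin(t̂_x/cos β) if t_z < 0 and t_x < 0, and α = arcsin(t̂_x/cos β) otherwise. Then cos β > 0 and c_t Ω^2 (sin α cos β, -sin β, cos α cos β) = t. -/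
open Real

/-- **Correctness of the explicit inverse-allocation formulas**: for `t ≠ 0` with
`(t_x, t_z) ≠ (0,0)`, setting `Ω = √(‖t‖/c_t)`, `β = -arcsin(t̂_y)` and `α` by the
case-defined formula, we get `cos β > 0` and
`c_t Ω² (sin α cos β, -sin β, cos α cos β) = t`. -/
theorem inverse_allocation_correct (ct : ℝ) (hct : 0 < ct)
    (t : EuclideanSpace ℝ (Fin 3)) (ht : t ≠ 0) (htxz : (t 0, t 2) ≠ (0, 0))
    (that : EuclideanSpace ℝ (Fin 3)) (hthat : that = ‖t‖⁻¹ • t)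
    (Ω β α : ℝ)
    (hΩ : Ω = Real.sqrt (‖t‖ / ct))
    (hβ : β = -arcsin (that 1))
    (hα : α = if t 2 < 0 ∧ 0 ≤ t 0 then π - arcsin (that 0 / cos β)
      else if t 2 < 0 ∧ t 0 < 0 then -π - arcsin (that 0 / cos β)
      else arcsin (that 0 / cos β)) :
    0 < cos β ∧
      (ct * Ω ^ 2) • (WithLp.toLp 2 ![sin α * cos β, -sin β, cos α * cos β] :
        EuclideanSpace ℝ (Fin 3)) = t := by
  have hn : (0:ℝ) < ‖t‖ := norm_pos_iff.mpr ht
  set n := ‖t‖ with hndef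
  have hneq : n = Real.sqrt (t 0 ^ 2 + t 1 ^ 2 + t 2 ^ 2) := by
    rw [hndef, EuclideanSpace.norm_eq, Fin.sum_univ_three]
    simp [Real.norm_eq_abs, sq_abs]
  have hn2 : n ^ 2 = t 0 ^ 2 + t 1 ^ 2 + t 2 ^ 2 := by
    rw [hneq, Real.sq_sqrt (by positivity)]
  have h02 : t 0 ≠ 0 ∨ t 2 ≠ 0 := by
    by_contra h
    push_neg at h
    exact htxz (by simp [h.1, h.2])
  have hr2pos : 0 < t 0 ^ 2 + t 2 ^ 2 := by
    rcases h02 with h | h <;> positivity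
  set r := Real.sqrt (t 0 ^ 2 + t 2 ^ 2) with hrdef
  have hr2 : r ^ 2 = t 0 ^ 2 + t 2 ^ 2 := Real.sq_sqrt hr2pos.le
  have hr : 0 < r := Real.sqrt_pos.mpr hr2pos
  have hn2' : n ^ 2 = t 1 ^ 2 + r ^ 2 := by rw [hr2]; linarith
  have hthat' : ∀ i, that i = t i / n := by
    intro i; rw [hthat]; simp [div_eq_inv_mul]
  have hcos : cos β = r / n := by
    rw [hβ, Real.cos_neg, Real.cos_arcsin, hthat' 1]
    have h1 : 1 - (t 1 / n) ^ 2 = (r / n) ^ 2 := by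
      field_simp
      linarith
    rw [h1, Real.sqrt_sq (by positivity)]
  have hcospos : 0 < cos β := by rw [hcos]; positivity
  have ht1abs : |t 1| ≤ n := by
    rw [← Real.sqrt_sq_eq_abs, hneq]
    exact Real.sqrt_le_sqrt (by nlinarith [sq_nonneg (t 0), sq_nonneg (t 2)])
  have hsinβ : sin β = -(t 1 / n) := by
    rw [hβ, Real.sin_neg, Real.sin_arcsin, hthat' 1]
    · rw [hthat' 1, le_div_iff₀ hn]
      have := (abs_le.mp ht1abs).1; linarith
    · rw [hthat' 1, div_le_one hn]
      exact (abs_le.mp ht1abs).2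
  have hs : that 0 / cos β = t 0 / r := by
    rw [hthat' 0, hcos]
    field_simp
  have ht0abs : |t 0| ≤ r := by
    rw [← Real.sqrt_sq_eq_abs, hrdef]
    exact Real.sqrt_le_sqrt (by nlinarith [sq_nonneg (t 2)])
  have hb1 : -1 ≤ t 0 / r := by
    rw [le_div_iff₀ hr]
    have := (abs_le.mp ht0abs).1; linarith
  have hb2 : t 0 / r ≤ 1 := by
    rw [div_le_one hr]
    exact (abs_le.mp ht0abs).2
  have hsinarc : sin (arcsin (t 0 / r)) = t 0 / r := Real.sin_arcsin hb1 hb2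
  have hcosarc : cos (arcsin (t 0 / r)) = |t 2| / r := by
    rw [Real.cos_arcsin]
    have h1 : 1 - (t 0 / r) ^ 2 = (|t 2| / r) ^ 2 := by
      rw [div_pow, div_pow, sq_abs]
      field_simp
      linarith
    rw [h1, Real.sqrt_sq (by positivity)]
  have hΩn : ct * Ω ^ 2 = n := by
    rw [hΩ, Real.sq_sqrt (by positivity)]
    field_simp
  have key : sin α = t 0 / r ∧ cos α = t 2 / r := by
    rw [hα]; split_ifs with h1 h2
    · rw [hs, Real.sin_pi_sub, Real.cos_pi_sub, hsinarc, hcosarc,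
        abs_of_neg h1.1]
      exact ⟨rfl, by ring⟩
    · rw [hs]
      constructor
      · rw [show -π - arcsin (t 0 / r) = -(π + arcsin (t 0 / r)) by ring,
          Real.sin_neg, Real.sin_add]
        simp [hsinarc]
      · rw [show -π - arcsin (t 0 / r) = -(π + arcsin (t 0 / r)) by ring,
          Real.cos_neg, Real.cos_add]
        simp only [hcosarc, abs_of_neg h2.1, Real.cos_pi, Real.sin_pi, hsinarc]
        ring
    · have ht2 : 0 ≤ t 2 := by
        by_contra h
        push_neg at h
        rcases le_or_gt 0 (t 0) with h' | h'
        · exact h1 ⟨h, h'⟩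
        · exact h2 ⟨h, h'⟩
      rw [hs, hsinarc, hcosarc, abs_of_nonneg ht2]
      exact ⟨rfl, rfl⟩
  have h0 : (ct * Ω ^ 2) * (sin α * cos β) = t 0 := by
    rw [hΩn, key.1, hcos]; field_simp
  have h1 : (ct * Ω ^ 2) * (-sin β) = t 1 := by
    rw [hΩn, hsinβ]; field_simp
  have h2 : (ct * Ω ^ 2) * (cos α * cos β) = t 2 := by
    rw [hΩn, key.2, hcos]; field_simp
  refine ⟨hcospos, ?_⟩
  ext i
  fin_cases i
  · simpa using h0
  · simpa using h1
  · simpa using h2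
end

section
/- Boundedness of the error-transport matrix: for every Q ∈ SO(3) and every x ∈ ℝ^3, ‖ (1/2)( tr(Q) I − Q ) x ‖ ≤ ‖x‖; consequently, along the attitude error dynamics e_R' = (1/2)(tr(RᵀR_d) I − RᵀR_d) e_ω one has ‖e_R'‖ ≤ ‖e_ω‖. -/
open Real Matrix

/-- `SO(3)`: real 3×3 matrices `Q` with `Qᵀ Q = I` and `det Q = 1`. -/
def SO3 (Q : Matrix (Fin 3) (Fin 3) ℝ) : Prop :=
  Qᵀ * Q = 1 ∧ Q.det = 1

private lemma dot_self_nonneg' (v : Fin 3 → ℝ) : 0 ≤ v ⬝ᵥ v :=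
  Finset.sum_nonneg fun _ _ => mul_self_nonneg _

private lemma dot_helper (A : Matrix (Fin 3) (Fin 3) ℝ) (u v : Fin 3 → ℝ) :
    u ⬝ᵥ A.mulVec v = Aᵀ.mulVec u ⬝ᵥ v := by
  simp [dotProduct, Matrix.mulVec, Fin.sum_univ_three]; ring

private lemma key' (Q : Matrix (Fin 3) (Fin 3) ℝ) (hQ : SO3 Q) (xf : Fin 3 → ℝ) :
    (((1 / 2 : ℝ) • (Q.trace • (1 : Matrix (Fin 3) (Fin 3) ℝ) - Q)).mulVec xf) ⬝ᵥ
      (((1 / 2 : ℝ) • (Q.trace • (1 : Matrix (Fin 3) (Fin 3) ℝ) - Q)).mulVec xf)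
      ≤ xf ⬝ᵥ xf := by
  obtain ⟨h1, hdet⟩ := hQ
  set t := Q.trace with ht
  have hQQt : Q * Qᵀ = 1 := mul_eq_one_comm.mpr h1
  have hadj : Q.adjugate = Qᵀ := by
    have h3 : Q * Q.adjugate = 1 := by rw [Matrix.mul_adjugate, hdet, one_smul]
    calc Q.adjugate = (Qᵀ * Q) * Q.adjugate := by rw [h1, one_mul]
    _ = Qᵀ * (Q * Q.adjugate) := by rw [Matrix.mul_assoc]
    _ = Qᵀ := by rw [h3, mul_one]
  have hU : Q.adjugate = Q * Q - Q.trace • Q + (Q.adjugate).trace • 1 := by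
    rw [Matrix.adjugate_fin_three]
    ext i j
    fin_cases i <;> fin_cases j <;>
      simp [Matrix.mul_apply, Matrix.trace_fin_three, Fin.sum_univ_three,
        Matrix.one_apply] <;> ring
  have hCH : Qᵀ = Q * Q - t • Q + t • 1 := by
    rw [← hadj]; rw [hU, hadj, Matrix.trace_transpose, ← ht]
  have hQ3 : Q * (Q * Q) = t • (Q * Q) - t • Q + 1 := by
    have h4 : Q * Qᵀ = Q * (Q * Q - t • Q + t • 1) := by rw [← hCH]
    rw [hQQt, Matrix.mul_add, Matrix.mul_sub, Matrix.mul_smul, Matrix.mul_smul,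
      mul_one] at h4
    rw [h4]; module
  set M := Q + Qᵀ + (1 - t) • (1 : Matrix (Fin 3) (Fin 3) ℝ) with hM
  have hMalt : M = Q * Q + (1 - t) • Q + 1 := by rw [hM, hCH]; module
  have hQM : Q * M = M := by
    rw [hMalt, Matrix.mul_add, Matrix.mul_add, Matrix.mul_smul, mul_one, hQ3]
    module
  have hMM : M * M = (3 - t) • M := by
    nth_rewrite 1 [hMalt]
    rw [Matrix.add_mul, Matrix.add_mul, Matrix.smul_mul, one_mul,
      Matrix.mul_assoc, hQM, hQM]
    module
  have hMsymm : Mᵀ = M := by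
    rw [hM]
    simp [Matrix.transpose_add, Matrix.transpose_smul]
    module
  have htr2 : (Q * Q).trace = t ^ 2 - 2 * t := by
    have := congrArg Matrix.trace hCH
    simp [Matrix.trace_add, Matrix.trace_sub, Matrix.trace_smul,
      Matrix.trace_one, Matrix.trace_transpose, ← ht] at this
    nlinarith [this]
  have hE : 0 ≤ (3 - t) * (t + 1) := by
    have hW : 0 ≤ ((Q - Qᵀ) * (Q - Qᵀ)ᵀ).trace := by
      simp [Matrix.trace, Matrix.diag, Matrix.mul_apply, Fin.sum_univ_three, ← sq]
      positivity
    have hexp : ((Q - Qᵀ) * (Q - Qᵀ)ᵀ).trace = 6 - 2 * (t ^ 2 - 2 * t) := by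
      rw [Matrix.transpose_sub, Matrix.transpose_transpose, Matrix.mul_sub,
        Matrix.sub_mul, Matrix.sub_mul, Matrix.trace_sub, Matrix.trace_sub,
        Matrix.trace_sub]
      have h5 : (Qᵀ * Qᵀ).trace = (Q * Q).trace := by
        rw [← Matrix.transpose_mul, Matrix.trace_transpose]
      rw [h5, htr2, hQQt, h1]
      simp [Matrix.trace_one]
      ring
    rw [hexp] at hW; nlinarith [hW]
  have hC : t ≤ 3 := by
    have e0 := congrFun (congrFun h1 0) 0
    have e1 := congrFun (congrFun h1 1) 1
    have e2 := congrFun (congrFun h1 2) 2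
    simp [Matrix.mul_apply, Fin.sum_univ_three, Matrix.one_apply] at e0 e1 e2
    have htt : t = Q 0 0 + Q 1 1 + Q 2 2 := by rw [ht, Matrix.trace_fin_three]
    nlinarith [sq_nonneg (Q 0 0 - 1), sq_nonneg (Q 1 1 - 1), sq_nonneg (Q 2 2 - 1),
      sq_nonneg (Q 1 0), sq_nonneg (Q 2 0), sq_nonneg (Q 0 1), sq_nonneg (Q 2 1),
      sq_nonneg (Q 0 2), sq_nonneg (Q 1 2), e0, e1, e2]
  set r := xf ⬝ᵥ xf with hr
  set p := xf ⬝ᵥ Q.mulVec xf with hp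
  have hr0 : 0 ≤ r := dot_self_nonneg' xf
  have hQx : Q.mulVec xf ⬝ᵥ Q.mulVec xf = r := by
    rw [dotProduct_comm, dot_helper, Matrix.mulVec_mulVec, h1, Matrix.one_mulVec, hr]
  have hQtx : xf ⬝ᵥ Qᵀ.mulVec xf = p := by
    rw [dot_helper, Matrix.transpose_transpose, dotProduct_comm, hp]
  have hQtx2 : Qᵀ.mulVec xf ⬝ᵥ Qᵀ.mulVec xf = r := by
    rw [dotProduct_comm, dot_helper, Matrix.transpose_transpose,
      Matrix.mulVec_mulVec, hQQt, Matrix.one_mulVec, hr]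
  have hB : p ≤ r := by
    have h0 : 0 ≤ (xf - Qᵀ.mulVec xf) ⬝ᵥ (xf - Qᵀ.mulVec xf) :=
      dot_self_nonneg' _
    rw [sub_dotProduct, dotProduct_sub, dotProduct_sub, hQtx, hQtx2, ← hr] at h0
    have hcomm : Qᵀ.mulVec xf ⬝ᵥ xf = p := by rw [dotProduct_comm, hQtx]
    rw [hcomm] at h0
    linarith
  have hMdot : xf ⬝ᵥ M.mulVec xf = 2 * p - (t - 1) * r := by
    rw [hM, Matrix.add_mulVec, Matrix.add_mulVec, Matrix.smul_mulVec,
      Matrix.one_mulVec, dotProduct_add, dotProduct_add, dotProduct_smul, hQtx,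
      ← hp, ← hr]
    rw [smul_eq_mul]
    ring
  have hD : 0 ≤ 2 * p - (t - 1) * r := by
    rw [← hMdot]
    have h9 : M.mulVec xf ⬝ᵥ M.mulVec xf = (M * M).mulVec xf ⬝ᵥ xf := by
      rw [dot_helper, hMsymm, Matrix.mulVec_mulVec]
    have hkey : (3 - t) * (xf ⬝ᵥ M.mulVec xf) = M.mulVec xf ⬝ᵥ M.mulVec xf := by
      rw [h9, hMM, Matrix.smul_mulVec, smul_dotProduct, smul_eq_mul,
        dotProduct_comm]
    rcases lt_or_eq_of_le hC with h | h
    · have h6 : 0 ≤ (3 - t) * (xf ⬝ᵥ M.mulVec xf) := by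
        rw [hkey]; exact dot_self_nonneg' _
      nlinarith [h6]
    · have h7 : M.mulVec xf ⬝ᵥ M.mulVec xf = 0 := by rw [← hkey, ← h]; ring
      have h8 : M.mulVec xf = 0 := dotProduct_self_eq_zero.mp h7
      rw [h8, dotProduct_zero]
  have heval : ((1 / 2 : ℝ) • (t • (1 : Matrix (Fin 3) (Fin 3) ℝ) - Q)).mulVec xf
      = (1 / 2 : ℝ) • (t • xf - Q.mulVec xf) := by
    rw [Matrix.smul_mulVec, Matrix.sub_mulVec, Matrix.smul_mulVec,
      Matrix.one_mulVec]
  rw [heval]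
  have hval : ((1/2:ℝ) • (t • xf - Q.mulVec xf)) ⬝ᵥ ((1/2:ℝ) • (t • xf - Q.mulVec xf))
      = (1/4) * (t^2 * (xf ⬝ᵥ xf) - 2*t*(xf ⬝ᵥ Q.mulVec xf)
        + Q.mulVec xf ⬝ᵥ Q.mulVec xf) := by
    simp [dotProduct, Matrix.mulVec, Fin.sum_univ_three, Pi.smul_apply,
      Pi.sub_apply, smul_eq_mul]
    ring
  rw [hval, hQx, ← hp, ← hr]
  clear_value t r p
  clear hval heval hMdot hQx hQtx hQtx2 hMM hMalt hQM hMsymm hCH hQ3 hU hadj htr2 hM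
  rcases le_or_gt 0 t with htpos | htneg
  · nlinarith [mul_nonneg htpos hD, mul_nonneg (by linarith : (0:ℝ) ≤ 3 - t) hr0]
  · nlinarith [mul_nonneg (by linarith : (0:ℝ) ≤ -t) (by linarith : (0:ℝ) ≤ r - p),
      mul_nonneg hE hr0]

private lemma norm_sq_eq_dot (v : EuclideanSpace ℝ (Fin 3)) : ‖v‖ ^ 2 = v ⬝ᵥ v := by
  rw [EuclideanSpace.norm_eq, Real.sq_sqrt (by positivity)]
  simp [dotProduct, sq]

private lemma key (Q : Matrix (Fin 3) (Fin 3) ℝ) (hQ : SO3 Q)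
    (x : EuclideanSpace ℝ (Fin 3)) :
    ‖(show EuclideanSpace ℝ (Fin 3) from
      WithLp.toLp 2 (((1 / 2 : ℝ) • (Q.trace • (1 : Matrix (Fin 3) (Fin 3) ℝ) - Q)).mulVec x))‖
      ≤ ‖x‖ := by
  have h1 : ‖(show EuclideanSpace ℝ (Fin 3) from
      WithLp.toLp 2 (((1 / 2 : ℝ) • (Q.trace • (1 : Matrix (Fin 3) (Fin 3) ℝ) - Q)).mulVec x))‖ ^ 2
      ≤ ‖x‖ ^ 2 := by
    rw [norm_sq_eq_dot, norm_sq_eq_dot]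
    exact key' Q hQ x
  have h2 := norm_nonneg (show EuclideanSpace ℝ (Fin 3) from
      WithLp.toLp 2 (((1 / 2 : ℝ) • (Q.trace • (1 : Matrix (Fin 3) (Fin 3) ℝ) - Q)).mulVec x))
  nlinarith [h1, h2, norm_nonneg x]

/-- **Boundedness of the error-transport matrix**: for every `Q ∈ SO(3)` and `x ∈ ℝ³`,
`‖(1/2)(tr(Q) I − Q) x‖ ≤ ‖x‖`; consequently, along the attitude error dynamics
`e_R' = (1/2)(tr(Rᵀ R_d) I − Rᵀ R_d) e_ω` one has `‖e_R'‖ ≤ ‖e_ω‖`. -/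
theorem error_transport_matrix_bounded :
    (∀ Q : Matrix (Fin 3) (Fin 3) ℝ, SO3 Q → ∀ x : EuclideanSpace ℝ (Fin 3),
      ‖(show EuclideanSpace ℝ (Fin 3) from
        WithLp.toLp 2 (((1 / 2 : ℝ) • (Q.trace • (1 : Matrix (Fin 3) (Fin 3) ℝ) - Q)).mulVec x))‖
        ≤ ‖x‖) ∧
    (∀ R Rd : Matrix (Fin 3) (Fin 3) ℝ, SO3 R → SO3 Rd →
      ∀ eω : EuclideanSpace ℝ (Fin 3),
      ‖(show EuclideanSpace ℝ (Fin 3) from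
        WithLp.toLp 2 (((1 / 2 : ℝ) • ((Rᵀ * Rd).trace • (1 : Matrix (Fin 3) (Fin 3) ℝ)
            - Rᵀ * Rd)).mulVec eω))‖ ≤ ‖eω‖) := by
  constructor
  · exact key
  · intro R Rd hR hRd eω
    have hSO : SO3 (Rᵀ * Rd) := by
      constructor
      · rw [Matrix.transpose_mul, Matrix.transpose_transpose, Matrix.mul_assoc,
          ← Matrix.mul_assoc R Rᵀ Rd, mul_eq_one_comm.mpr hR.1, one_mul,
          hRd.1]
      · rw [Matrix.det_mul, Matrix.det_transpose, hR.2, hRd.2, mul_one]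
    exact key (Rᵀ * Rd) hSO eω
end

section
/- Exponential stability of the translational closed-loop error dynamics: let m, k_p, k_v > 0 and let e_p, e_v : ℝ → ℝ^3 be differentiable functions satisfying e_p'(t) = e_v(t) and e_v'(t) = (1/m)(−k_p e_p(t) − k_v e_v(t)) for all t. Then there exist constants C ≥ 0 and λ > 0 such that for all t ≥ 0, ‖e_p(t)‖ + ‖e_v(t)‖ ≤ C e^{−λ t} (‖e_p(0)‖ + ‖e_v(0)‖). -/
set_option maxHeartbeats 1000000

open Real

local notation "⟪" x ", " y "⟫" => @inner ℝ _ _ x y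

/-- Scalar helper: derivative bound for the Lyapunov function. -/
lemma lyap_deriv_bound (α β ε c p v s : ℝ) (hα : 0 < α) (hβ : 0 < β)
    (hε : 0 < ε) (hε1 : ε ≤ α) (hε2 : ε ≤ 1) (hε3 : ε * (2*α + β^2) ≤ 2*α*β)
    (hc1 : c ≤ ε*α/2) (hc2 : c ≤ β) (hs : |s| ≤ p * v) (hp : 0 ≤ p) (hv : 0 ≤ v) :
    -ε*α*p^2 - (2*β-ε)*v^2 - ε*β*s ≤ -c*(p^2+v^2) := by
  have h1 : -s ≤ p*v := by cases abs_le.mp hs; linarith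
  have young : ε*β*(p*v) ≤ (ε*α/2)*p^2 + (ε*β^2/(2*α))*v^2 := by
    rw [← sub_nonneg]
    have hkey : 0 ≤ ε * (α*p - β*v)^2 := mul_nonneg hε.le (sq_nonneg _)
    have hexpand : (ε*α/2)*p^2 + (ε*β^2/(2*α))*v^2 - ε*β*(p*v)
        = (ε * (α*p - β*v)^2) / (2*α) := by field_simp; ring
    rw [hexpand]
    positivity
  have hs' : -(ε*β*s) ≤ ε*β*(p*v) := by
    have := mul_le_mul_of_nonneg_left h1 (mul_nonneg hε.le hβ.le)
    linarith [this]
  have h4 : ε*β^2/(2*α) ≤ β - ε := by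
    rw [div_le_iff₀ (by positivity)]
    nlinarith [hε3]
  have hcp : c*p^2 ≤ (ε*α/2)*p^2 := mul_le_mul_of_nonneg_right hc1 (sq_nonneg p)
  have hcv : c*v^2 ≤ β*v^2 := mul_le_mul_of_nonneg_right hc2 (sq_nonneg v)
  have h4' : (ε*β^2/(2*α))*v^2 ≤ (β-ε)*v^2 := mul_le_mul_of_nonneg_right h4 (sq_nonneg v)
  nlinarith [young, hs', hcp, hcv, h4']

/-- **Exponential stability of the translational closed-loop error dynamics**: let
`m, k_p, k_v > 0` and let `e_p, e_v : ℝ → ℝ³` satisfy `e_p' = e_v` and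
`e_v' = (1/m)(−k_p e_p − k_v e_v)`. Then there exist `C ≥ 0` and `λ > 0` such that
`‖e_p(t)‖ + ‖e_v(t)‖ ≤ C e^{−λ t} (‖e_p(0)‖ + ‖e_v(0)‖)` for all `t ≥ 0`. -/
theorem translational_exponential_stability (m kp kv : ℝ)
    (hm : 0 < m) (hkp : 0 < kp) (hkv : 0 < kv)
    (ep ev : ℝ → EuclideanSpace ℝ (Fin 3))
    (hep : ∀ t, HasDerivAt ep (ev t) t)
    (hev : ∀ t, HasDerivAt ev ((1 / m) • (-(kp • ep t) - kv • ev t)) t) :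
    ∃ C ≥ (0 : ℝ), ∃ lam > (0 : ℝ), ∀ t ≥ (0 : ℝ),
      ‖ep t‖ + ‖ev t‖ ≤ C * Real.exp (-lam * t) * (‖ep 0‖ + ‖ev 0‖) := by
  set α : ℝ := kp / m with hαdef
  set β : ℝ := kv / m with hβdef
  have hα : 0 < α := div_pos hkp hm
  have hβ : 0 < β := div_pos hkv hm
  -- rewrite the velocity derivative
  have hev' : ∀ t, HasDerivAt ev (-(α • ep t) - β • ev t) t := by
    intro t
    convert hev t using 1
    rw [hαdef, hβdef]
    match_scalars <;> field_simp
  -- choose ε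
  set ε : ℝ := min (min α 1) (2*α*β / (2*α + β^2)) with hεdef
  have hden : 0 < 2*α + β^2 := by positivity
  have hε : 0 < ε := by
    apply lt_min (lt_min hα one_pos)
    positivity
  have hε1 : ε ≤ α := le_trans (min_le_left _ _) (min_le_left _ _)
  have hε2 : ε ≤ 1 := le_trans (min_le_left _ _) (min_le_right _ _)
  have hε3 : ε * (2*α + β^2) ≤ 2*α*β := by
    have := min_le_right (min α 1) (2*α*β / (2*α + β^2))
    calc ε * (2*α + β^2) ≤ (2*α*β / (2*α + β^2)) * (2*α + β^2) := by
          apply mul_le_mul_of_nonneg_right this hden.le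
      _ = 2*α*β := by field_simp
  set c : ℝ := min (ε*α/2) β with hcdef
  have hc : 0 < c := lt_min (by positivity) hβ
  set M : ℝ := max α 1 + 1 with hMdef
  have hM : 0 < M := by positivity
  have hMα : α ≤ M := le_trans (le_max_left _ _) (by linarith)
  have hM1 : (1:ℝ) ≤ M := le_trans (le_max_right _ _) (by linarith)
  set m₁ : ℝ := min α 1 / 2 with hm₁def
  have hm₁ : 0 < m₁ := by positivity
  set lam : ℝ := c / (2*M) with hlamdef
  have hlam : 0 < lam := by positivity
  -- Lyapunov function
  set V : ℝ → ℝ := fun t => α * ⟪ep t, ep t⟫ + ⟪ev t, ev t⟫ + ε * ⟪ep t, ev t⟫ with hVdef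
  set V' : ℝ → ℝ := fun t =>
    α * (⟪ep t, ev t⟫ + ⟪ev t, ep t⟫)
    + (⟪ev t, -(α • ep t) - β • ev t⟫ + ⟪-(α • ep t) - β • ev t, ev t⟫)
    + ε * (⟪ep t, -(α • ep t) - β • ev t⟫ + ⟪ev t, ev t⟫) with hV'def
  have hVderiv : ∀ t, HasDerivAt V (V' t) t := by
    intro t
    exact (((hep t).inner ℝ (hep t)).const_mul α).add
      (((hev' t).inner ℝ (hev' t))) |>.add
      ((((hep t).inner ℝ (hev' t))).const_mul ε)
  -- pointwise quantities
  have key : ∀ t,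
      (m₁ * (‖ep t‖^2 + ‖ev t‖^2) ≤ V t) ∧ (V t ≤ M * (‖ep t‖^2 + ‖ev t‖^2)) ∧
      (V' t ≤ -c * (‖ep t‖^2 + ‖ev t‖^2)) := by
    intro t
    set p := ‖ep t‖
    set v := ‖ev t‖
    have hp : 0 ≤ p := norm_nonneg _
    have hv : 0 ≤ v := norm_nonneg _
    have hpp : ⟪ep t, ep t⟫ = p^2 := real_inner_self_eq_norm_sq _
    have hvv : ⟪ev t, ev t⟫ = v^2 := real_inner_self_eq_norm_sq _
    have hs : |⟪ep t, ev t⟫| ≤ p * v := abs_real_inner_le_norm _ _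
    set s := ⟪ep t, ev t⟫ with hsdef
    have h1 : -s ≤ p*v := by cases abs_le.mp hs; linarith
    have h2 : s ≤ p*v := by cases abs_le.mp hs; linarith
    have hVt : V t = α*p^2 + v^2 + ε*s := by rw [hVdef]; simp [hpp, hvv, hsdef]; rfl
    have hmin1 : min α 1 ≤ α := min_le_left _ _
    have hmin2 : min α 1 ≤ 1 := min_le_right _ _
    refine ⟨?_, ?_, ?_⟩
    · rw [hVt, hm₁def]
      nlinarith [sq_nonneg (p-v), sq_nonneg (p+v), sq_nonneg p, sq_nonneg v]
    · rw [hVt]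
      have e0 : ε*s ≤ 1*(p*v) :=
        le_trans (mul_le_mul_of_nonneg_left h2 hε.le)
          (mul_le_mul_of_nonneg_right hε2 (mul_nonneg hp hv))
      have hMα' : α ≤ M - 1 := by
        rw [hMdef]; have := le_max_left α 1; linarith
      have hM1' : (1:ℝ) ≤ M - 1 := by
        rw [hMdef]; have := le_max_right α 1; linarith
      have e2 : α*p^2 ≤ (M-1)*p^2 := mul_le_mul_of_nonneg_right hMα' (sq_nonneg p)
      have e3 : 1*v^2 ≤ (M-1)*v^2 := mul_le_mul_of_nonneg_right hM1' (sq_nonneg v)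
      nlinarith [sq_nonneg (p-v)]
    · have hV't : V' t = -ε*α*p^2 - (2*β-ε)*v^2 - ε*β*s := by
        rw [hV'def]
        simp only [inner_sub_right, inner_sub_left, inner_neg_right, inner_neg_left,
          real_inner_smul_right, real_inner_smul_left, hpp, hvv]
        have : ⟪ev t, ep t⟫ = s := real_inner_comm _ _
        rw [this]
        ring
      rw [hV't]
      exact lyap_deriv_bound α β ε c p v s hα hβ hε hε1 hε2 hε3
        (min_le_left _ _) (min_le_right _ _) hs hp hv
  -- V nonneg and differential inequality
  have hVnonneg : ∀ t, 0 ≤ V t := fun t =>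
    le_trans (by positivity) ((key t).1)
  have hdiff : ∀ t, V' t + 2*lam * V t ≤ 0 := by
    intro t
    have h1 := (key t).2.1
    have h2 := (key t).2.2
    have : 2*lam * V t ≤ c * (‖ep t‖^2 + ‖ev t‖^2) := by
      have hlamM : 2*lam*M = c := by rw [hlamdef]; field_simp
      calc 2*lam * V t ≤ 2*lam * (M * (‖ep t‖^2 + ‖ev t‖^2)) := by
            apply mul_le_mul_of_nonneg_left h1 (by positivity)
        _ = c * (‖ep t‖^2 + ‖ev t‖^2) := by rw [← hlamM]; ring
    linarith
  -- Gronwall via antitone of exp(2 lam t) * V t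
  set W : ℝ → ℝ := fun t => Real.exp (2*lam*t) * V t with hWdef
  have hW : Antitone W := by
    apply antitone_of_hasDerivAt_nonpos
      (f' := fun t => Real.exp (2*lam*t) * (2*lam * V t + V' t))
    · intro t
      have h1 : HasDerivAt (fun t => Real.exp (2*lam*t)) (Real.exp (2*lam*t) * (2*lam)) t := by
        have := (hasDerivAt_id t).const_mul (2*lam)
        have h2 : HasDerivAt (fun y => 2*lam*y) (2*lam) t := by simpa using this
        exact (Real.hasDerivAt_exp (2*lam*t)).comp t h2
      have := h1.mul (hVderiv t)
      exact this.congr_deriv (by ring)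
    · intro t
      have := hdiff t
      have h0 : (0:ℝ) < Real.exp (2*lam*t) := Real.exp_pos _
      have : 2*lam * V t + V' t ≤ 0 := by linarith
      exact mul_nonpos_of_nonneg_of_nonpos h0.le this
  have hVt : ∀ t ≥ (0:ℝ), V t ≤ Real.exp (-(2*lam)*t) * V 0 := by
    intro t ht
    have := hW ht
    simp only [hWdef] at this
    norm_num at this
    have hexp : (0:ℝ) < Real.exp (2*lam*t) := Real.exp_pos _
    calc V t = (Real.exp (2*lam*t))⁻¹ * (Real.exp (2*lam*t) * V t) := by
          field_simp
      _ ≤ (Real.exp (2*lam*t))⁻¹ * V 0 := by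
          apply mul_le_mul_of_nonneg_left this (by positivity)
      _ = Real.exp (-(2*lam*t)) * V 0 := by rw [Real.exp_neg]
      _ = Real.exp (-(2*lam)*t) * V 0 := by ring_nf
  -- final constants
  refine ⟨Real.sqrt (2*M/m₁), Real.sqrt_nonneg _, lam, hlam, ?_⟩
  intro t ht
  set p₀ := ‖ep 0‖
  set v₀ := ‖ev 0‖
  set pt := ‖ep t‖
  set vt := ‖ev t‖
  have hp₀ : 0 ≤ p₀ := norm_nonneg _
  have hv₀ : 0 ≤ v₀ := norm_nonneg _
  have hpt : 0 ≤ pt := norm_nonneg _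
  have hvt : 0 ≤ vt := norm_nonneg _
  have h1 : m₁ * (pt^2 + vt^2) ≤ V t := (key t).1
  have h2 : V 0 ≤ M * (p₀^2 + v₀^2) := (key 0).2.1
  have h3 := hVt t ht
  have hexp : 0 ≤ Real.exp (-(2*lam)*t) := (Real.exp_pos _).le
  have hsq : (pt + vt)^2 ≤ (Real.sqrt (2*M/m₁) * Real.exp (-lam*t) * (p₀+v₀))^2 := by
    have hC2 : (Real.sqrt (2*M/m₁))^2 = 2*M/m₁ := Real.sq_sqrt (by positivity)
    have hE2 : (Real.exp (-lam*t))^2 = Real.exp (-(2*lam)*t) := by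
      rw [sq, ← Real.exp_add]; ring_nf
    have step1 : (pt + vt)^2 ≤ 2 * (pt^2 + vt^2) := by nlinarith [sq_nonneg (pt - vt)]
    have step2 : pt^2 + vt^2 ≤ (1/m₁) * V t := by
      rw [← sub_nonneg]
      have : (1/m₁) * V t - (pt^2+vt^2) = (1/m₁) * (V t - m₁*(pt^2+vt^2)) := by
        field_simp
      rw [this]
      exact mul_nonneg (by positivity) (by linarith)
    have step3 : V t ≤ Real.exp (-(2*lam)*t) * (M * (p₀^2 + v₀^2)) :=
      le_trans h3 (mul_le_mul_of_nonneg_left h2 hexp)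
    have step4 : p₀^2 + v₀^2 ≤ (p₀ + v₀)^2 := by nlinarith [mul_nonneg hp₀ hv₀]
    have step5 : V t ≤ Real.exp (-(2*lam)*t) * (M * (p₀+v₀)^2) := by
      refine le_trans step3 (mul_le_mul_of_nonneg_left ?_ hexp)
      exact mul_le_mul_of_nonneg_left step4 hM.le
    calc (pt + vt)^2 ≤ 2 * ((1/m₁) * V t) := by linarith
      _ ≤ 2 * ((1/m₁) * (Real.exp (-(2*lam)*t) * (M * (p₀+v₀)^2))) := by
          apply mul_le_mul_of_nonneg_left _ (by norm_num)
          exact mul_le_mul_of_nonneg_left step5 (by positivity)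
      _ = (Real.sqrt (2*M/m₁) * Real.exp (-lam*t) * (p₀+v₀))^2 := by
          rw [mul_pow, mul_pow, hC2, hE2]; field_simp
  have hRHS : 0 ≤ Real.sqrt (2*M/m₁) * Real.exp (-lam*t) * (p₀+v₀) := by positivity
  nlinarith [hsq, add_nonneg hpt hvt, hRHS]
end
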